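/- arXiv:1803.07169 — 3 statements merged into one kernel-verified Lean document; each statement's English description precedes it below -/
import Mathlib

section
/- Let (a_n) be a bounded sequence of complex numbers, m₀ a nonnegative integer, q a positive integer, and j ∈ {-1,1}. For any s with σ = Re(s) > 1 - m₀, the double series ∑_{n>q} ∑_{m≥m₀} |(jq)^m C(-s,m) a_n n^{-s-m}| is bounded above by (sup_n |a_n|) · (q+1)^{m₀+|s|} · ζ(σ+m₀). -/
/-- Generalized binomial coefficient C(w,m) = w(w-1)⋯(w-m+1)/m!. -/
noncomputable def genBinom {K : Type*} [Field K] (w : K) (m : ℕ) : K :=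
  (∏ i ∈ Finset.range m, (w - i)) / (m.factorial : K)

/-!
With `y = q / (q + 1)` and `N = q + 1 + n ≥ q + 1`, the summand of index `(n, k)` (where
`m = m₀ + k`) is at most `(sup ‖a‖) (q + 1) ^ m₀ N ^ (-(σ + m₀)) |C(-‖s‖, m)| y ^ m`, using
`‖C(-s, m)‖ ≤ |C(-‖s‖, m)|`. This majorant factors into a function of `n` and one of `k`, so
the double series is bounded by a tail of `ζ(σ + m₀)` times `(q + 1) ^ m₀ ∑ₘ |C(-‖s‖, m)| y ^ m`.
For `r ≥ 0` the coefficients `C(-r, m) (-1) ^ m` are nonnegative, so the binomial series of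
`(1 - y) ^ (-r)` has exactly these absolute values as coefficients, and the last sum is
`(1 - y) ^ (-‖s‖) = (q + 1) ^ ‖s‖`.
-/

open Finset

theorem genBinom_eq_choose {K : Type*} [Field K] [CharZero K] (w : K) (m : ℕ) :
    genBinom w m = Ring.choose w m := by
  rw [genBinom, Ring.choose_eq_smul, ← Polynomial.aeval_eq_smeval, Polynomial.aeval_def,
    ← Polynomial.eval_map, descPochhammer_map, descPochhammer_eval_eq_prod_range, smul_eq_mul,
    div_eq_inv_mul]

theorem genBinom_neg_mul_neg_one_pow {K : Type*} [Field K] (r : K) (m : ℕ) :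
    genBinom (-r) m * (-1) ^ m = (∏ i ∈ range m, (r + i)) / m.factorial := by
  rw [genBinom, div_mul_eq_mul_div, show (-1 : K) ^ m = ∏ _i ∈ range m, (-1 : K) by simp,
    ← prod_mul_distrib]
  exact congrArg (· / _) (prod_congr rfl fun i _ => by ring)

theorem abs_genBinom_neg {r : ℝ} (hr : 0 ≤ r) (m : ℕ) :
    |genBinom (-r) m| = genBinom (-r) m * (-1) ^ m := by
  rw [← abs_of_nonneg (a := genBinom (-r) m * (-1) ^ m), abs_mul, abs_pow, abs_neg, abs_one,
    one_pow, mul_one]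
  rw [genBinom_neg_mul_neg_one_pow]
  exact div_nonneg (prod_nonneg fun i _ => by positivity) (Nat.cast_nonneg _)

theorem norm_genBinom_neg_le {𝕜 : Type*} [RCLike 𝕜] (w : 𝕜) (m : ℕ) :
    ‖genBinom (-w) m‖ ≤ |genBinom (-‖w‖) m| := by
  rw [abs_genBinom_neg (norm_nonneg w), genBinom_neg_mul_neg_one_pow, genBinom, norm_div,
    norm_prod, RCLike.norm_natCast]
  gcongr with i
  calc ‖-w - i‖ = ‖w + i‖ := by rw [← norm_neg]; ring_nf
    _ ≤ ‖w‖ + i := (norm_add_le _ _).trans_eq (by rw [RCLike.norm_natCast])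

theorem hasSum_abs_genBinom_neg_mul_pow {r y : ℝ} (hr : 0 ≤ r) (hy₀ : 0 ≤ y) (hy₁ : y < 1) :
    HasSum (fun m ↦ |genBinom (-r) m| * y ^ m) ((1 - y) ^ (-r)) := by
  have hy : ‖-y‖₊ < 1 := by rw [← NNReal.coe_lt_coe]; simpa [abs_of_nonneg hy₀] using hy₁
  have := Real.one_add_rpow_hasFPowerSeriesOnBall_zero (a := -r) |>.hasSum (y := -y)
    (by simpa [enorm_eq_nnnorm] using hy)
  rw [zero_add, ← sub_eq_add_neg] at this
  simp only [binomialSeries, FormalMultilinearSeries.ofScalars_apply_eq,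
    ← genBinom_eq_choose, smul_eq_mul, neg_pow y] at this
  simpa only [abs_genBinom_neg hr, mul_assoc] using this

theorem tsum_le_tsum_mul_tsum_of_le {α β : Type*} {F : α × β → ℝ} {f : α → ℝ} {g : β → ℝ}
    (hF : ∀ p, 0 ≤ F p) (hf₀ : ∀ a, 0 ≤ f a) (hg₀ : ∀ b, 0 ≤ g b) (hf : Summable f)
    (hg : Summable g) (h : ∀ p, F p ≤ f p.1 * g p.2) :
    ∑' p, F p ≤ (∑' a, f a) * ∑' b, g b := by
  have hfg := hf.mul_of_nonneg hg hf₀ hg₀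
  exact ((hfg.of_nonneg_of_le hF h).tsum_le_tsum h hfg).trans_eq (hf.tsum_mul_tsum hg hfg).symm

theorem tsum_natCast_add_rpow_neg_le {p : ℝ} (hp : 1 < p) (k : ℕ) :
    ∑' n : ℕ, ((k + 1 + n : ℕ) : ℝ) ^ (-p) ≤ ∑' n : ℕ+, (n : ℝ) ^ (-p) := by
  have hsum : Summable fun n : ℕ ↦ (n : ℝ) ^ (-p) := Real.summable_nat_rpow.2 (by linarith)
  exact Summable.tsum_le_tsum_of_inj (fun n ↦ (⟨k + 1 + n, by omega⟩ : ℕ+))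
    (fun a b hab ↦ by simpa using congrArg PNat.val hab)
    (fun _ _ ↦ by positivity) (fun _ ↦ le_rfl)
    (hsum.comp_injective (add_right_injective (k + 1)))
    (hsum.comp_injective PNat.coe_injective)

theorem norm_summand_le {j s A : ℂ} (hj : ‖j‖ = 1) {C : ℝ} (hA : ‖A‖ ≤ C) {q N : ℕ}
    (hN : q + 1 ≤ N) (m₀ k : ℕ) :
    ‖(j * q) ^ (m₀ + k) * genBinom (-s) (m₀ + k) * A / (N : ℂ) ^ (s + (m₀ + k : ℕ))‖ ≤
      (N : ℝ) ^ (-(s.re + m₀)) * (C * ((q : ℝ) + 1) ^ m₀ *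
        (|genBinom (-‖s‖) (m₀ + k)| * ((q : ℝ) / (q + 1)) ^ (m₀ + k))) := by
  have hNq : (q : ℝ) + 1 ≤ N := by exact_mod_cast hN
  have hN₀ : (0 : ℝ) < N := by linarith
  have hpow : (N : ℝ) ^ (s + (m₀ + k : ℕ)).re = (N : ℝ) ^ (s.re + m₀) * (N : ℝ) ^ k := by
    rw [← Real.rpow_natCast _ k, ← Real.rpow_add hN₀]
    simp [add_assoc]
  rw [norm_div, norm_mul, norm_mul, norm_pow, norm_mul, hj, one_mul, Complex.norm_natCast,
    Complex.norm_natCast_cpow_of_pos (by omega), hpow]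
  calc (q : ℝ) ^ (m₀ + k) * ‖genBinom (-s) (m₀ + k)‖ * ‖A‖ / ((N : ℝ) ^ (s.re + m₀) * N ^ k)
      ≤ (q : ℝ) ^ (m₀ + k) * |genBinom (-‖s‖) (m₀ + k)| * C /
          ((N : ℝ) ^ (s.re + m₀) * ((q : ℝ) + 1) ^ k) := by
        gcongr
        · exact mul_nonneg (by positivity) ((norm_nonneg _).trans hA)
        · exact norm_genBinom_neg_le s _
    _ = _ := by
        rw [Real.rpow_neg hN₀.le, div_pow, pow_add]
        field_simp
        ring

theorem summable_abs_genBinom_neg_mul_div_pow {r : ℝ} (hr : 0 ≤ r) (q m₀ : ℕ) :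
    Summable fun k ↦ |genBinom (-r) (m₀ + k)| * ((q : ℝ) / (q + 1)) ^ (m₀ + k) :=
  (hasSum_abs_genBinom_neg_mul_pow hr (by positivity) ((div_lt_one (by positivity)).2
    (lt_add_one _))).summable.comp_injective (add_right_injective m₀)

theorem tsum_abs_genBinom_neg_mul_div_pow_le {r : ℝ} (hr : 0 ≤ r) (q m₀ : ℕ) :
    ∑' k, |genBinom (-r) (m₀ + k)| * ((q : ℝ) / (q + 1)) ^ (m₀ + k) ≤ ((q : ℝ) + 1) ^ r := by
  have hq : (0 : ℝ) < q + 1 := by positivity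
  have hsum :=
    hasSum_abs_genBinom_neg_mul_pow hr (by positivity) ((div_lt_one hq).2 (lt_add_one _))
  calc _ ≤ ∑' m, |genBinom (-r) m| * ((q : ℝ) / (q + 1)) ^ m :=
        (summable_abs_genBinom_neg_mul_div_pow hr q m₀).tsum_le_tsum_of_inj _
          (add_right_injective m₀) (fun _ _ ↦ by positivity) (fun _ ↦ le_rfl) hsum.summable
    _ = ((q : ℝ) + 1) ^ r := by
        rw [hsum.tsum_eq, one_sub_div hq.ne', add_sub_cancel_left, one_div, Real.inv_rpow hq.le,
          Real.rpow_neg hq.le, inv_inv]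

theorem stmt_2_general (a : ℕ → ℂ) (C : ℝ) (hC : ∀ n, ‖a n‖ ≤ C)
    (m₀ : ℕ) (q : ℕ) (j : ℂ) (hj : j = -1 ∨ j = 1)
    (s : ℂ) (hs : 1 - (m₀ : ℝ) < s.re) :
    (∑' p : ℕ × ℕ,
      ‖(j * q) ^ (m₀ + p.2) * genBinom (-s) (m₀ + p.2) *
        a (q + 1 + p.1) / ((q + 1 + p.1 : ℕ) : ℂ) ^ (s + (m₀ + p.2 : ℕ))‖)
      ≤ (⨆ n, ‖a n‖) * ((q : ℝ) + 1) ^ ((m₀ : ℝ) + ‖s‖) *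
          ∑' n : ℕ+, (n : ℝ) ^ (-(s.re + m₀)) := by
  set M := ⨆ n, ‖a n‖
  have haM : ∀ n, ‖a n‖ ≤ M := le_ciSup ⟨C, Set.forall_mem_range.2 hC⟩
  have hM : 0 ≤ M := (norm_nonneg _).trans (haM 0)
  have hj₁ : ‖j‖ = 1 := by rcases hj with rfl | rfl <;> simp
  have hp : 1 < s.re + m₀ := by linarith
  calc _ ≤ (∑' n : ℕ, ((q + 1 + n : ℕ) : ℝ) ^ (-(s.re + m₀))) *
        ∑' k, M * ((q : ℝ) + 1) ^ m₀ *
          (|genBinom (-‖s‖) (m₀ + k)| * ((q : ℝ) / (q + 1)) ^ (m₀ + k)) :=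
        tsum_le_tsum_mul_tsum_of_le (fun _ ↦ norm_nonneg _) (fun _ ↦ by positivity)
          (fun _ ↦ by positivity)
          ((Real.summable_nat_rpow.2 (by linarith)).comp_injective (add_right_injective (q + 1)))
          ((summable_abs_genBinom_neg_mul_div_pow (norm_nonneg s) q m₀).mul_left _)
          fun p ↦ norm_summand_le hj₁ (haM _) (by omega) m₀ p.2
    _ ≤ (∑' n : ℕ+, (n : ℝ) ^ (-(s.re + m₀))) *
          (M * ((q : ℝ) + 1) ^ m₀ * ((q : ℝ) + 1) ^ ‖s‖) := by
        rw [tsum_mul_left]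
        gcongr
        · exact tsum_natCast_add_rpow_neg_le hp q
        · exact tsum_abs_genBinom_neg_mul_div_pow_le (norm_nonneg s) q m₀
    _ = _ := by
        rw [Real.rpow_add (by positivity), Real.rpow_natCast]
        ring

theorem stmt_2 (a : ℕ → ℂ) (C : ℝ) (hC : ∀ n, ‖a n‖ ≤ C)
    (m₀ : ℕ) (q : ℕ) (hq : 0 < q) (j : ℂ) (hj : j = -1 ∨ j = 1)
    (s : ℂ) (hs : 1 - (m₀ : ℝ) < s.re) :
    (∑' p : ℕ × ℕ,
      ‖(j * q) ^ (m₀ + p.2) * genBinom (-s) (m₀ + p.2) *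
        a (q + 1 + p.1) / ((q + 1 + p.1 : ℕ) : ℂ) ^ (s + (m₀ + p.2 : ℕ))‖)
      ≤ (⨆ n, ‖a n‖) * ((q : ℝ) + 1) ^ ((m₀ : ℝ) + ‖s‖) *
          ∑' n : ℕ+, (n : ℝ) ^ (-(s.re + m₀)) :=
  stmt_2_general a C hC m₀ q j hj s hs
end

section
/- Let α be a positive irrational and q a positive integer. For all s with Re(s) > 1, g_{-αq}(s) = ∑_{n ∈ A_{-αq}} n^{-s} satisfies g_{-αq}(s) = ∑_{n≥1} R(α(n+q)) n^{-s} - J_α(s) + (1 - {αq})·ζ(s). -/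
/-- The odd 1-periodic sawtooth function: R(x) = {x} - 1/2 if x ∉ ℤ, R(x) = 0 if x ∈ ℤ. -/
noncomputable def sawR (x : ℝ) : ℝ := if Int.fract x = 0 then 0 else Int.fract x - 1 / 2

/-!
For `n ≥ 1` put `x = αn` and `y = αq`; by irrationality none of `{x}`, `{y}`, `{x + y}` vanishes,
so `{-y} = 1 - {y}` and `R = {·} - 1/2` at all three points. The indicator of `{x} < 1 - {y}` is
the indicator of "no carry" in `{x} + {y}`, i.e. `1 - ({x} + {y} - {x + y})`, which rearranges to
`R(x + y) - R(x) + (1 - {y})`. Multiplying by `n^{-s}` and summing the three absolutely convergent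
series gives the theorem, the last one being `(1 - {αq}) ζ(s)`.
-/

open Complex

namespace Int

variable {R : Type*} [CommRing R] [LinearOrder R] [IsStrictOrderedRing R] [FloorRing R]

theorem fract_add_of_fract_add_fract_lt_one {a b : R} (h : fract a + fract b < 1) :
    fract (a + b) = fract a + fract b :=
  fract_eq_iff.2 ⟨add_nonneg (fract_nonneg a) (fract_nonneg b), h,
    ⌊a⌋ + ⌊b⌋, by push_cast; rw [← self_sub_fract a, ← self_sub_fract b]; ring⟩

theorem fract_add_of_one_le_fract_add_fract {a b : R} (h : 1 ≤ fract a + fract b) :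
    fract (a + b) = fract a + fract b - 1 := by
  refine fract_eq_iff.2 ⟨by linarith, ?_, ⌊a⌋ + ⌊b⌋ + 1, ?_⟩
  · linarith [fract_lt_one a, fract_lt_one b]
  · push_cast; rw [← self_sub_fract a, ← self_sub_fract b]; ring

end Int

theorem Irrational.fract_ne_zero {x : ℝ} (h : Irrational x) : Int.fract x ≠ 0 :=
  Int.fract_ne_zero_iff.2 fun ⟨m, hm⟩ => h.ne_int m hm.symm

theorem sawR_of_fract_ne_zero {x : ℝ} (hx : Int.fract x ≠ 0) : sawR x = Int.fract x - 1 / 2 :=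
  if_neg hx

theorem abs_sawR_le (x : ℝ) : |sawR x| ≤ 1 / 2 := by
  unfold sawR
  split_ifs
  · norm_num
  · rw [abs_le]
    constructor <;> linarith [Int.fract_nonneg x, Int.fract_lt_one x]

theorem ite_fract_lt_fract_neg_eq_sawR {x y : ℝ} (hx : Int.fract x ≠ 0) (hy : Int.fract y ≠ 0)
    (hxy : Int.fract (x + y) ≠ 0) :
    (if Int.fract x < Int.fract (-y) then 1 else 0 : ℝ)
      = sawR (x + y) - sawR x + (1 - Int.fract y) := by
  rw [Int.fract_neg hy, sawR_of_fract_ne_zero hx, sawR_of_fract_ne_zero hxy]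
  split_ifs
  · rw [Int.fract_add_of_fract_add_fract_lt_one (by linarith)]
    ring
  · rw [Int.fract_add_of_one_le_fract_add_fract (by linarith)]
    ring

theorem summable_ofReal_mul_pnat_cpow_neg {c : ℕ+ → ℝ} {C : ℝ} (hc : ∀ n, |c n| ≤ C) {s : ℂ}
    (hs : 1 < s.re) : Summable fun n : ℕ+ => (c n : ℂ) * (n : ℂ) ^ (-s) := by
  have hnat : Summable fun n : ℕ => ‖(n : ℂ) ^ (-s)‖ := by
    simpa [cpow_neg, one_div] using (summable_one_div_nat_cpow.2 hs).norm
  refine Summable.of_norm_bounded ((hnat.comp_injective PNat.coe_injective).mul_left C) fun n => ?_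
  rw [norm_mul, norm_real]
  exact mul_le_mul_of_nonneg_right (hc n) (norm_nonneg _)

theorem tsum_pnat_cpow_neg_eq_riemannZeta {s : ℂ} (hs : 1 < s.re) :
    ∑' n : ℕ+, (n : ℂ) ^ (-s) = riemannZeta s := by
  rw [zeta_eq_tsum_one_div_nat_add_one_cpow hs,
    tsum_pnat_eq_tsum_succ (f := fun n : ℕ => (n : ℂ) ^ (-s))]
  simp [cpow_neg]

open Classical in
theorem stmt_10_general (α : ℝ) (hirr : Irrational α) (q : ℕ) (hq : 0 < q)
    (s : ℂ) (hs : 1 < s.re) :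
    ∑' n : ℕ+, (if Int.fract (α * n) < Int.fract (-(α * q)) then (n : ℂ) ^ (-s) else 0)
      = (∑' n : ℕ+, (sawR (α * ((n : ℝ) + q)) : ℂ) * (n : ℂ) ^ (-s))
        - (∑' n : ℕ+, (sawR (α * (n : ℝ)) : ℂ) * (n : ℂ) ^ (-s))
        + ((1 - Int.fract (α * q) : ℝ) : ℂ) * riemannZeta s := by
  have hfract (m : ℕ) (hm : m ≠ 0) : Int.fract (α * m) ≠ 0 :=
    (hirr.mul_natCast hm).fract_ne_zero
  have hterm (n : ℕ+) :
      (if Int.fract (α * n) < Int.fract (-(α * q)) then (n : ℂ) ^ (-s) else 0)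
        = (sawR (α * ((n : ℝ) + q)) : ℂ) * (n : ℂ) ^ (-s)
          - (sawR (α * (n : ℝ)) : ℂ) * (n : ℂ) ^ (-s)
          + ((1 - Int.fract (α * q) : ℝ) : ℂ) * (n : ℂ) ^ (-s) := by
    have hsum : α * ((n : ℝ) + q) = α * n + α * q := mul_add α n q
    have := ite_fract_lt_fract_neg_eq_sawR (hfract n n.ne_zero) (hfract q hq.ne')
      (by rw [← hsum]; exact_mod_cast hfract (n + q) (by omega))
    rw [hsum, ← sub_mul, ← add_mul, ← ofReal_sub, ← ofReal_add, ← this]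
    split_ifs <;> simp
  have hsaw {f : ℕ+ → ℝ} : Summable fun n : ℕ+ => (sawR (f n) : ℂ) * (n : ℂ) ^ (-s) :=
    summable_ofReal_mul_pnat_cpow_neg (fun n => abs_sawR_le (f n)) hs
  have hconst : Summable fun n : ℕ+ => ((1 - Int.fract (α * q) : ℝ) : ℂ) * (n : ℂ) ^ (-s) :=
    summable_ofReal_mul_pnat_cpow_neg (fun _ => le_rfl) hs
  rw [tsum_congr hterm, (hsaw.sub hsaw).tsum_add hconst, hsaw.tsum_sub hsaw, tsum_mul_left,
    tsum_pnat_cpow_neg_eq_riemannZeta hs]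

open Classical in
theorem stmt_10 (α : ℝ) (hα : 0 < α) (hirr : Irrational α) (q : ℕ) (hq : 0 < q)
    (s : ℂ) (hs : 1 < s.re) :
    ∑' n : ℕ+, (if Int.fract (α * n) < Int.fract (-(α * q)) then (n : ℂ) ^ (-s) else 0)
      = (∑' n : ℕ+, (sawR (α * ((n : ℝ) + q)) : ℂ) * (n : ℂ) ^ (-s))
        - (∑' n : ℕ+, (sawR (α * (n : ℝ)) : ℂ) * (n : ℂ) ^ (-s))
        + ((1 - Int.fract (α * q) : ℝ) : ℂ) * riemannZeta s :=
  stmt_10_general α hirr q hq s hs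
end

section
/- Let α > 1 be irrational and β = 1/α. For all s with Re(s) > 1, the Beatty zeta function satisfies ζ_α(s) = ζ(s) - g_{-β}(s), where g_{-β}(s) = ∑_{n : {βn} < 1-{β}} n^{-s}. -/
/-!
With `β = α⁻¹`, `⌊α n⌋ = m` means `β m < n < β m + β` (irrationality makes the inequalities
strict), so `m` lies in the Beatty sequence iff the interval `(β m, β m + β)` contains an integer,
i.e. iff `1 - β < {β m}`; the boundary case `{β m} = 1 - β` would make `β (m + 1)` an integer.
Hence the positive integers split into the Beatty sequence, hit exactly once since `n ↦ ⌊α n⌋` is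
strictly increasing, and the set `{m | {β m} < 1 - β}` summed in `g_{-β}`; splitting the Dirichlet
series of `ζ` accordingly gives the identity.
-/

lemma riemannZeta_eq_tsum_pnat_cpow_neg {s : ℂ} (hs : 1 < s.re) :
    riemannZeta s = ∑' n : ℕ+, (n : ℂ) ^ (-s) := by
  rw [zeta_eq_tsum_one_div_nat_add_one_cpow hs,
    tsum_pnat_eq_tsum_succ (f := fun n : ℕ => (n : ℂ) ^ (-s))]
  simp [Complex.cpow_neg]

lemma summable_pnat_cpow_neg {s : ℂ} (hs : 1 < s.re) :
    Summable fun n : ℕ+ => (n : ℂ) ^ (-s) := by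
  simpa [Complex.cpow_neg, Function.comp_def] using
    (Complex.summable_one_div_nat_cpow.mpr hs).comp_injective PNat.coe_injective

lemma Int.exists_btwn_iff_one_sub_lt_fract {R : Type*} [CommRing R] [LinearOrder R]
    [IsStrictOrderedRing R] [FloorRing R] (x y : R) :
    (∃ n : ℤ, x < n ∧ n < x + y) ↔ 1 - y < Int.fract x := by
  rw [Int.fract]
  constructor
  · rintro ⟨n, hxn, hny⟩
    have : (⌊x⌋ : R) + 1 ≤ n := by exact_mod_cast Int.floor_lt.mpr hxn
    linarith
  · intro h
    exact ⟨⌊x⌋ + 1, by push_cast; linarith [Int.lt_floor_add_one x], by push_cast; linarith⟩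

lemma Int.fract_ne_one_sub_of_irrational_add {x y : ℝ} (h : Irrational (x + y)) :
    Int.fract x ≠ 1 - y := by
  intro hxy
  apply h.ne_int (⌊x⌋ + 1)
  have := Int.floor_add_fract x
  push_cast
  linarith

lemma Irrational.floor_eq_iff {x : ℝ} (hx : Irrational x) {m : ℤ} :
    ⌊x⌋ = m ↔ (m : ℝ) < x ∧ x < m + 1 := by
  rw [Int.floor_eq_iff]
  exact and_congr_left fun _ => (Ne.le_iff_lt (hx.ne_int m).symm)

/-- `Nat.toPNat'` sends `0` to `1`; this never matters for `1 ≤ α`. -/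
noncomputable def beattyPNat (α : ℝ) (n : ℕ+) : ℕ+ := ⌊α * n⌋₊.toPNat'

section
variable {α : ℝ}

lemma coe_beattyPNat (hα : 1 ≤ α) (n : ℕ+) : ((beattyPNat α n : ℕ) : ℤ) = ⌊α * n⌋ := by
  have hαn : 1 ≤ α * n := one_le_mul_of_one_le_of_one_le hα (Nat.one_le_cast.mpr n.pos)
  rw [beattyPNat, Nat.toPNat'_coe, if_pos (Nat.floor_pos.mpr hαn),
    Int.natCast_floor_eq_floor (by linarith)]

lemma beattyPNat_strictMono (hα : 1 ≤ α) : StrictMono (beattyPNat α) := by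
  intro a b hab
  have hab' : (a : ℝ) + 1 ≤ b := by exact_mod_cast hab
  rw [← PNat.coe_lt_coe, ← Nat.cast_lt (α := ℤ), coe_beattyPNat hα, coe_beattyPNat hα,
    ← Int.add_one_le_iff, ← Int.floor_add_one]
  exact Int.floor_mono (by nlinarith)

lemma beattyPNat_eq_iff (hα : 1 < α) (hirr : Irrational α) {n m : ℕ+} :
    beattyPNat α n = m ↔ α⁻¹ * m < n ∧ n < α⁻¹ * m + α⁻¹ := by
  have hα0 : 0 < α := by linarith
  rw [← PNat.coe_inj, ← Nat.cast_inj (R := ℤ), coe_beattyPNat hα.le,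
    (hirr.mul_natCast n.ne_zero).floor_eq_iff, ← mul_add_one, inv_mul_lt_iff₀ hα0,
    lt_inv_mul_iff₀ hα0]
  push_cast
  rfl

lemma mem_range_beattyPNat_iff (hα : 1 < α) (hirr : Irrational α) (m : ℕ+) :
    m ∈ Set.range (beattyPNat α) ↔ 1 - α⁻¹ < Int.fract (α⁻¹ * m) := by
  rw [← Int.exists_btwn_iff_one_sub_lt_fract]
  simp only [Set.mem_range, beattyPNat_eq_iff hα hirr]
  constructor
  · rintro ⟨n, hn⟩
    exact ⟨n, by exact_mod_cast hn⟩
  · rintro ⟨n, hmn, hnm⟩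
    have hn : 0 < n := by
      have : 0 < α⁻¹ * m := by have := hα.trans' one_pos; positivity
      exact_mod_cast this.trans hmn
    refine ⟨⟨n.toNat, by omega⟩, ?_⟩
    have : ((n.toNat : ℕ) : ℝ) = n := by exact_mod_cast Int.toNat_of_nonneg hn.le
    simpa [this] using And.intro hmn hnm

lemma compl_range_beattyPNat (hα : 1 < α) (hirr : Irrational α) :
    (Set.range (beattyPNat α))ᶜ = {m : ℕ+ | Int.fract (α⁻¹ * m) < 1 - α⁻¹} := by
  ext m
  have hne : Int.fract (α⁻¹ * m) ≠ 1 - α⁻¹ := by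
    apply Int.fract_ne_one_sub_of_irrational_add
    rw [← mul_add_one, mul_comm]
    exact_mod_cast hirr.inv.natCast_mul (m + 1 : ℕ+).ne_zero
  rw [Set.mem_compl_iff, mem_range_beattyPNat_iff hα hirr, Set.mem_ofPred_eq, not_lt,
    hne.le_iff_lt]

end

open Classical in
theorem stmt_11 (α : ℝ) (hα : 1 < α) (hirr : Irrational α) (β : ℝ) (hβ : β = 1 / α)
    (s : ℂ) (hs : 1 < s.re) :
    ∑' n : ℕ+, ((⌊α * n⌋ : ℂ)) ^ (-s)
      = riemannZeta s
        - ∑' n : ℕ+, (if Int.fract (β * n) < 1 - Int.fract β then (n : ℂ) ^ (-s) else 0) := by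
  rw [one_div] at hβ
  subst hβ
  have hsum := summable_pnat_cpow_neg hs
  have hfract : Int.fract α⁻¹ = α⁻¹ :=
    Int.fract_eq_self.mpr ⟨by positivity, inv_lt_one_of_one_lt₀ hα⟩
  have hcompl :
      ∑' n : ℕ+, (if Int.fract (α⁻¹ * n) < 1 - Int.fract α⁻¹ then (n : ℂ) ^ (-s) else 0)
        = ∑' m : ↥(Set.range (beattyPNat α))ᶜ, (m : ℂ) ^ (-s) := by
    rw [compl_range_beattyPNat hα hirr, tsum_subtype _ fun m : ℕ+ => (m : ℂ) ^ (-s), hfract]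
    rfl
  rw [hcompl, riemannZeta_eq_tsum_pnat_cpow_neg hs,
    ← Summable.tsum_add_tsum_compl (s := Set.range (beattyPNat α)) (hsum.subtype _)
      (hsum.subtype _),
    tsum_range (fun m : ℕ+ => (m : ℂ) ^ (-s)) (beattyPNat_strictMono hα.le).injective,
    add_sub_cancel_right]
  congr! with n
  rw [← coe_beattyPNat hα.le]
  rfl
end
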